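/- Let N = 2n + 1 with n ≥ 1, let k ≥ 0, and let 1 ≤ i ≤ n. Set b = F_{N-1} + F_{N-2}·k, x_0 = F_i + F_{i-1}·k, x_1 = F_{N-i} + F_{N-i-1}·k, y_0 = F_{2i-1} + F_{2i-2}·k, y_1 = F_{N-(2i-1)} + F_{N-2i}·k. Then x_1² + x_0² = y_1·b + y_0. -/
import Mathlib

lemma cassini_even (d : ℕ) :
    (Nat.fib (2 * d + 1) : ℤ) ^ 2 = Nat.fib (2 * d) * Nat.fib (2 * d + 2) + 1 := by
  induction d with
  | zero => simp
  | succ d ih =>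
    have h1 : Nat.fib (2 * d + 2) = Nat.fib (2 * d) + Nat.fib (2 * d + 1) :=
      Nat.fib_add_two
    have h2 : Nat.fib (2 * d + 3) = Nat.fib (2 * d + 1) + Nat.fib (2 * d + 2) :=
      Nat.fib_add_two
    have h3 : Nat.fib (2 * d + 4) = Nat.fib (2 * d + 2) + Nat.fib (2 * d + 3) :=
      Nat.fib_add_two
    have e1 : (Nat.fib (2 * (d + 1) + 1) : ℤ) = Nat.fib (2 * d) + 2 * Nat.fib (2 * d + 1) := by
      show (Nat.fib (2 * d + 3) : ℤ) = _
      rw [h2, h1]; push_cast; ring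
    have e2 : (Nat.fib (2 * (d + 1)) : ℤ) = Nat.fib (2 * d) + Nat.fib (2 * d + 1) := by
      show (Nat.fib (2 * d + 2) : ℤ) = _
      rw [h1]; push_cast; ring
    have e3 : (Nat.fib (2 * (d + 1) + 2) : ℤ) =
        2 * Nat.fib (2 * d) + 3 * Nat.fib (2 * d + 1) := by
      show (Nat.fib (2 * d + 4) : ℤ) = _
      rw [h3, h2, h1]; push_cast; ring
    have e0 : (Nat.fib (2 * d + 2) : ℤ) = Nat.fib (2 * d) + Nat.fib (2 * d + 1) := by
      rw [h1]; push_cast; ring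
    rw [e1, e2, e3]
    rw [e0] at ih
    linear_combination ih

theorem arith_fib_cycle_II (n : ℕ) (hn : 1 ≤ n) (N : ℕ) (hN : N = 2 * n + 1)
    (k : ℕ) (i : ℕ) (hi1 : 1 ≤ i) (hi2 : i ≤ n) :
    (Nat.fib (N - i) + Nat.fib (N - i - 1) * k) ^ 2 +
        (Nat.fib i + Nat.fib (i - 1) * k) ^ 2 =
      (Nat.fib (N - (2 * i - 1)) + Nat.fib (N - 2 * i) * k) *
          (Nat.fib (N - 1) + Nat.fib (N - 2) * k) +
        (Nat.fib (2 * i - 1) + Nat.fib (2 * i - 2) * k) := by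
  obtain ⟨j, rfl⟩ : ∃ j, i = j + 1 := ⟨i - 1, by omega⟩
  obtain ⟨d, rfl⟩ : ∃ d, n = j + 1 + d := ⟨n - (j + 1), by omega⟩
  subst hN
  -- normalize all indices
  have i1 : 2 * (j + 1 + d) + 1 - (j + 1) = j + 2 * d + 2 := by omega
  have i2 : 2 * (j + 1 + d) + 1 - (j + 1) - 1 = j + 2 * d + 1 := by omega
  have i3 : j + 1 - 1 = j := by omega
  have i4 : 2 * (j + 1 + d) + 1 - (2 * (j + 1) - 1) = 2 * d + 2 := by omega
  have i5 : 2 * (j + 1 + d) + 1 - 2 * (j + 1) = 2 * d + 1 := by omega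
  have i6 : 2 * (j + 1 + d) + 1 - 1 = 2 * j + 2 * d + 2 := by omega
  have i7 : 2 * (j + 1 + d) + 1 - 2 = 2 * j + 2 * d + 1 := by omega
  have i8 : 2 * (j + 1) - 1 = 2 * j + 1 := by omega
  have i9 : 2 * (j + 1) - 2 = 2 * j := by omega
  rw [i2, i1, i3, i4, i5, i6, i7, i8, i9]
  zify
  set A : ℤ := (Nat.fib j : ℤ) with hA
  set B : ℤ := (Nat.fib (j + 1) : ℤ) with hB
  set C : ℤ := (Nat.fib (2 * d) : ℤ) with hC
  set E : ℤ := (Nat.fib (2 * d + 1) : ℤ) with hE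
  have h1 : (Nat.fib (j + 2 * d + 1) : ℤ) = A * C + B * E := by
    have := Nat.fib_add j (2 * d)
    rw [hA, hB, hC, hE]
    push_cast [show j + 2 * d + 1 = j + 2 * d + 1 from rfl, this]
    ring
  have hfd : Nat.fib (2 * d + 2) = Nat.fib (2 * d) + Nat.fib (2 * d + 1) := Nat.fib_add_two
  have h2 : (Nat.fib (j + 2 * d + 2) : ℤ) = A * E + B * (C + E) := by
    have := Nat.fib_add j (2 * d + 1)
    rw [show j + (2 * d + 1) + 1 = j + 2 * d + 2 by omega] at this
    rw [hA, hB, hC, hE]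
    push_cast [this, hfd]
    ring
  have h3 : (Nat.fib (j + 2 * d) : ℤ) = A * E - A * C + B * C := by
    have hr : Nat.fib (j + 2 * d + 2) = Nat.fib (j + 2 * d) + Nat.fib (j + 2 * d + 1) :=
      Nat.fib_add_two
    have : (Nat.fib (j + 2 * d) : ℤ) =
        (Nat.fib (j + 2 * d + 2) : ℤ) - Nat.fib (j + 2 * d + 1) := by
      rw [hr]; push_cast; ring
    rw [this, h1, h2]; ring
  have h4 : (Nat.fib (2 * j + 2 * d + 2) : ℤ) =
      A * (A * C + B * E) + B * (A * E + B * (C + E)) := by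
    have := Nat.fib_add j (j + 2 * d + 1)
    rw [show j + (j + 2 * d + 1) + 1 = 2 * j + 2 * d + 2 by omega,
        show j + 2 * d + 1 + 1 = j + 2 * d + 2 by omega] at this
    rw [this]; push_cast [← hA, ← hB]
    rw [h1, h2]
  have h5 : (Nat.fib (2 * j + 2 * d + 1) : ℤ) =
      A * (A * E - A * C + B * C) + B * (A * C + B * E) := by
    have := Nat.fib_add j (j + 2 * d)
    rw [show j + (j + 2 * d) + 1 = 2 * j + 2 * d + 1 by omega] at this
    rw [this]; push_cast [← hA, ← hB]
    rw [h3, h1]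
  have h6 : (Nat.fib (2 * j + 1) : ℤ) = B ^ 2 + A ^ 2 := by
    rw [Nat.fib_two_mul_add_one]; push_cast [← hA, ← hB]; ring
  have h7 : (Nat.fib (2 * j) : ℤ) = 2 * A * B - A ^ 2 := by
    have hr1 : Nat.fib (2 * j + 2) = Nat.fib (2 * j) + Nat.fib (2 * j + 1) :=
      Nat.fib_add_two
    have hr2 := Nat.fib_add j (j + 1)
    rw [show j + (j + 1) + 1 = 2 * j + 2 by omega] at hr2
    have hr3 : Nat.fib (j + 2) = Nat.fib j + Nat.fib (j + 1) := Nat.fib_add_two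
    have : (Nat.fib (2 * j) : ℤ) = (Nat.fib (2 * j + 2) : ℤ) - Nat.fib (2 * j + 1) := by
      rw [hr1]; push_cast; ring
    rw [this, h6, hr2, hr3]; push_cast [← hA, ← hB]; ring
  have h8 : E ^ 2 = C ^ 2 + C * E + 1 := by
    have := cassini_even d
    rw [hfd] at this
    rw [hC, hE]; push_cast [this]; ring
  have h9 : (Nat.fib (2 * d + 2) : ℤ) = C + E := by rw [hfd]; push_cast [← hC, ← hE]; ring
  rw [h1, h2, h4, h5, h6, h7, h9]
  linear_combination (A ^ 2 - A ^ 2 * k - A ^ 2 * k ^ 2) * h8
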